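/- For every real q > 1, ∫_0^1 (1/(1+x)) · (log(1/x))^{q−1} · (log(log(1/x)))² dx = Γ''(q) η(q) + 2 Γ'(q) η'(q) + Γ(q) η''(q), where Γ', Γ'' are the first and second derivatives of the gamma function and η', η'' are the first and second derivatives of the Dirichlet eta function. -/

import Mathlib

/-!
Substituting `x = e^{-t}` turns the integral into `∫_0^∞ t^{q-1} (log t)^2 e^{-t}/(1+e^{-t}) dt`.
Expanding `e^{-t}/(1+e^{-t}) = ∑ (-1)^n e^{-(n+1)t}` and integrating termwise (the series of
integrals converges absolutely for `q > 1`), the rescaling `t ↦ t/(n+1)` gives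
`∫_0^∞ e^{-(n+1)t} t^{q-1} (log t)^2 dt = (n+1)^{-q} (Γ''(q) - 2 log(n+1) Γ'(q) + log(n+1)^2 Γ(q))`,
since `Γ^{(k)}(q) = ∫_0^∞ e^{-t} t^{q-1} (log t)^k dt`. Summing against `(-1)^n` and using
`η^{(k)}(q) = (-1)^k ∑ (-1)^n log(n+1)^k / (n+1)^q` yields the Leibniz-rule expression.
-/

/-- The Dirichlet eta (alternating zeta) function `η(s) = ∑_{n=1}^∞ (−1)^{n−1} n^{−s}`,
as a function of a real variable. -/
noncomputable def dirichletEtaReal (s : ℝ) : ℝ := ∑' n : ℕ, (-1 : ℝ) ^ n / ((n : ℝ) + 1) ^ s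

open Real Set MeasureTheory Filter
open scoped Nat

theorem abs_log_pow_le {δ t : ℝ} (k : ℕ) (hδ : 0 < δ) (ht : 0 < t) :
    |log t| ^ k ≤ k ! / δ ^ k * (t ^ δ + t ^ (-δ)) := by
  have hexp : |δ * log t| ^ k / k ! ≤ t ^ δ + t ^ (-δ) := by
    calc |δ * log t| ^ k / k ! ≤ exp |δ * log t| := pow_div_factorial_le_exp _ (abs_nonneg _) k
      _ ≤ exp (δ * log t) + exp (-(δ * log t)) := exp_abs_le _
      _ = t ^ δ + t ^ (-δ) := by rw [rpow_def_of_pos ht, rpow_def_of_pos ht]; ring_nf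
  rw [abs_mul, abs_of_pos hδ, mul_pow, div_le_iff₀ (by positivity)] at hexp
  rw [div_mul_eq_mul_div, le_div_iff₀ (by positivity)]
  linarith

theorem rpow_le_rpow_add_rpow {t a b x : ℝ} (ht : 0 < t) (ha : a ≤ x) (hb : x ≤ b) :
    t ^ x ≤ t ^ a + t ^ b := by
  rcases le_or_gt 1 t with h | h
  · linarith [rpow_le_rpow_of_exponent_le h hb, rpow_pos_of_pos ht a]
  · linarith [rpow_le_rpow_of_exponent_ge ht h.le ha, rpow_pos_of_pos ht b]

theorem integrableOn_exp_neg_mul_rpow_mul_log_pow {b a : ℝ} (hb : 0 < b) (ha : 0 < a) (k : ℕ) :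
    IntegrableOn (fun t => exp (-(b * t)) * t ^ (a - 1) * log t ^ k) (Ioi 0) := by
  have hmajor (c : ℝ) (hc : 0 < c) :
      IntegrableOn (fun t => t ^ (c - 1) * exp (-b * t)) (Ioi 0) := by
    simpa using integrableOn_rpow_mul_exp_neg_mul_rpow (p := 1) (by linarith) one_pos hb
  refine (((hmajor (a + a / 2) (by positivity)).add (hmajor (a / 2) (by positivity))).const_mul
    (k ! / (a / 2) ^ k)).mono' ?_ ?_
  · fun_prop
  · refine (ae_restrict_iff' measurableSet_Ioi).mpr (Eventually.of_forall fun t ht => ?_)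
    have ht : 0 < t := ht
    have hlog := abs_log_pow_le k (half_pos ha) ht
    rw [norm_mul, norm_mul, norm_pow, Real.norm_eq_abs, Real.norm_eq_abs, Real.norm_eq_abs,
      abs_of_pos (exp_pos _), abs_of_pos (rpow_pos_of_pos ht _)]
    have e1 : t ^ (a + a / 2 - 1) = t ^ (a - 1) * t ^ (a / 2) := by
      rw [← rpow_add ht]; ring_nf
    have e2 : t ^ (a / 2 - 1) = t ^ (a - 1) * t ^ (-(a / 2)) := by
      rw [← rpow_add ht]; ring_nf
    simp only [Pi.add_apply]
    rw [e1, e2, neg_mul]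
    calc exp (-(b * t)) * t ^ (a - 1) * |log t| ^ k
        ≤ exp (-(b * t)) * t ^ (a - 1) *
            (k ! / (a / 2) ^ k * (t ^ (a / 2) + t ^ (-(a / 2)))) := by gcongr
      _ = _ := by ring

noncomputable def gammaLogIntegral (k : ℕ) (s : ℝ) : ℝ :=
  ∫ t in Ioi 0, exp (-t) * t ^ (s - 1) * log t ^ k

theorem gammaLogIntegral_convergent {s : ℝ} (hs : 0 < s) (k : ℕ) :
    IntegrableOn (fun t => exp (-t) * t ^ (s - 1) * log t ^ k) (Ioi 0) := by
  simpa using integrableOn_exp_neg_mul_rpow_mul_log_pow one_pos hs k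

theorem hasDerivAt_gammaLogIntegral (k : ℕ) {s : ℝ} (hs : 0 < s) :
    HasDerivAt (gammaLogIntegral k) (gammaLogIntegral (k + 1) s) s := by
  have hderiv (t : ℝ) (ht : 0 < t) (x : ℝ) :
      HasDerivAt (fun x => exp (-t) * t ^ (x - 1) * log t ^ k)
        (exp (-t) * t ^ (x - 1) * log t ^ (k + 1)) x := by
    have := (((hasDerivAt_id' x).sub_const 1).const_rpow ht).const_mul (exp (-t))
    exact (this.mul_const (log t ^ k)).congr_deriv (by ring)
  have hbound := (gammaLogIntegral_convergent (half_pos hs) (k + 1)).norm.add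
    (gammaLogIntegral_convergent (by positivity : 0 < 3 * s / 2) (k + 1)).norm
  refine (hasDerivAt_integral_of_dominated_loc_of_deriv_le
    (F := fun x t => exp (-t) * t ^ (x - 1) * log t ^ k)
    (F' := fun x t => exp (-t) * t ^ (x - 1) * log t ^ (k + 1))
    (Metric.ball_mem_nhds s (half_pos hs))
    ((eventually_gt_nhds hs).mono fun x hx =>
      (gammaLogIntegral_convergent hx k).aestronglyMeasurable)
    (gammaLogIntegral_convergent hs k)
    (gammaLogIntegral_convergent hs (k + 1)).aestronglyMeasurable
    ?_ hbound ?_).2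
  · refine (ae_restrict_iff' measurableSet_Ioi).mpr (Eventually.of_forall fun t ht x hx => ?_)
    have ht : 0 < t := ht
    rw [Metric.mem_ball, Real.dist_eq, abs_lt] at hx
    have hpow : t ^ (x - 1) ≤ t ^ (s / 2 - 1) + t ^ (3 * s / 2 - 1) :=
      rpow_le_rpow_add_rpow ht (by linarith) (by linarith)
    simp only [Pi.add_apply, norm_mul, norm_pow, Real.norm_eq_abs, abs_of_pos (exp_pos _),
      abs_of_pos (rpow_pos_of_pos ht _)]
    calc exp (-t) * t ^ (x - 1) * |log t| ^ (k + 1)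
        ≤ exp (-t) * (t ^ (s / 2 - 1) + t ^ (3 * s / 2 - 1)) * |log t| ^ (k + 1) := by gcongr
      _ = _ := by ring
  · exact (ae_restrict_iff' measurableSet_Ioi).mpr
      (Eventually.of_forall fun t ht x _ => hderiv t ht x)

theorem gammaLogIntegral_zero {s : ℝ} (hs : 0 < s) : gammaLogIntegral 0 s = Gamma s := by
  simp [gammaLogIntegral, Gamma_eq_integral hs]

theorem deriv_Gamma_eq_gammaLogIntegral_one {s : ℝ} (hs : 0 < s) :
    deriv Gamma s = gammaLogIntegral 1 s := by
  rw [← (hasDerivAt_gammaLogIntegral 0 hs).deriv]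
  exact EventuallyEq.deriv_eq
    (eventually_gt_nhds hs |>.mono fun x hx => (gammaLogIntegral_zero hx).symm)

theorem deriv_deriv_Gamma_eq_gammaLogIntegral_two {s : ℝ} (hs : 0 < s) :
    deriv (deriv Gamma) s = gammaLogIntegral 2 s := by
  rw [← (hasDerivAt_gammaLogIntegral 1 hs).deriv]
  exact EventuallyEq.deriv_eq
    (eventually_gt_nhds hs |>.mono fun x hx => deriv_Gamma_eq_gammaLogIntegral_one hx)

theorem integral_exp_neg_mul_rpow_mul_log_sq {b s : ℝ} (hb : 0 < b) (hs : 0 < s) :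
    ∫ t in Ioi 0, exp (-(b * t)) * t ^ (s - 1) * log t ^ 2 =
      b ^ (-s) * (gammaLogIntegral 2 s - 2 * log b * gammaLogIntegral 1 s +
        log b ^ 2 * gammaLogIntegral 0 s) := by
  set f : ℕ → ℝ → ℝ := fun k u => exp (-u) * u ^ (s - 1) * log u ^ k
  have hf (k : ℕ) : IntegrableOn (f k) (Ioi 0) := gammaLogIntegral_convergent hs k
  have hscale := integral_comp_mul_left_Ioi
    (fun u => exp (-u) * (u / b) ^ (s - 1) * log (u / b) ^ 2) 0 hb
  simp only [mul_zero, mul_div_cancel_left₀ _ hb.ne', smul_eq_mul] at hscale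
  have hexpand : ∀ u ∈ Ioi (0 : ℝ), exp (-u) * (u / b) ^ (s - 1) * log (u / b) ^ 2 =
      b ^ (1 - s) * (f 2 u - 2 * log b * f 1 u + log b ^ 2 * f 0 u) := fun u hu => by
    rw [div_rpow (le_of_lt hu) hb.le, log_div (ne_of_gt hu) hb.ne', div_eq_mul_inv,
      ← rpow_neg hb.le, neg_sub]
    simp only [f]
    ring
  have hf21 : IntegrableOn (fun u => f 2 u - 2 * log b * f 1 u) (Ioi 0) :=
    (hf 2).sub ((hf 1).const_mul _)
  rw [hscale, setIntegral_congr_fun measurableSet_Ioi hexpand, integral_const_mul,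
    integral_add hf21 ((hf 0).const_mul _),
    integral_sub (hf 2) ((hf 1).const_mul _), integral_const_mul, integral_const_mul,
    ← mul_assoc, ← rpow_neg_one, ← rpow_add hb, show (-1 : ℝ) + (1 - s) = -s by ring]
  rfl

noncomputable def etaLogSeries (k : ℕ) (s : ℝ) : ℝ :=
  ∑' n : ℕ, (-1) ^ n * log ((n : ℝ) + 1) ^ k / ((n : ℝ) + 1) ^ s

theorem norm_neg_one_pow_mul_log_pow_div_rpow (k n : ℕ) (s : ℝ) :
    ‖(-1) ^ n * log ((n : ℝ) + 1) ^ k / ((n : ℝ) + 1) ^ s‖ =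
      log ((n : ℝ) + 1) ^ k / ((n : ℝ) + 1) ^ s := by
  have hn : (1 : ℝ) ≤ n + 1 := by simp
  rw [norm_div, norm_mul, norm_pow, norm_neg, norm_one, one_pow, one_mul, norm_pow,
    Real.norm_of_nonneg (log_nonneg hn), Real.norm_of_nonneg (by positivity)]

theorem summable_log_pow_div_rpow (k : ℕ) {a : ℝ} (ha : 1 < a) :
    Summable fun n : ℕ => log ((n : ℝ) + 1) ^ k / ((n : ℝ) + 1) ^ a := by
  obtain ⟨δ, hδ, hδa⟩ : ∃ δ : ℝ, 0 < δ ∧ δ - a < -1 := ⟨(a - 1) / 2, by linarith, by linarith⟩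
  have hp : Summable fun n : ℕ => ((n : ℝ) + 1) ^ (δ - a) := by
    simpa using (summable_nat_add_iff 1).mpr (summable_nat_rpow.mpr hδa)
  have hn (n : ℕ) : (1 : ℝ) ≤ n + 1 := by simp
  refine .of_nonneg_of_le
    (fun n => div_nonneg (pow_nonneg (log_nonneg (hn n)) k) (by positivity))
    (fun n => ?_) (hp.mul_left (2 * (k ! / δ ^ k)))
  have hn0 : (0 : ℝ) < n + 1 := by positivity
  have hlog : log ((n : ℝ) + 1) ^ k ≤ 2 * (k ! / δ ^ k) * ((n : ℝ) + 1) ^ δ := by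
    calc log ((n : ℝ) + 1) ^ k = |log ((n : ℝ) + 1)| ^ k := by
          rw [abs_of_nonneg (log_nonneg (hn n))]
      _ ≤ k ! / δ ^ k * (((n : ℝ) + 1) ^ δ + ((n : ℝ) + 1) ^ (-δ)) :=
          abs_log_pow_le k hδ hn0
      _ ≤ k ! / δ ^ k * (((n : ℝ) + 1) ^ δ + ((n : ℝ) + 1) ^ δ) := by
          gcongr <;> linarith [hn n]
      _ = _ := by ring
  rw [rpow_sub hn0, ← mul_div_assoc]
  gcongr

theorem hasSum_etaLogSeries (k : ℕ) {s : ℝ} (hs : 1 < s) :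
    HasSum (fun n : ℕ => (-1) ^ n * log ((n : ℝ) + 1) ^ k / ((n : ℝ) + 1) ^ s)
      (etaLogSeries k s) :=
  (Summable.of_norm (by simpa only [norm_neg_one_pow_mul_log_pow_div_rpow]
    using summable_log_pow_div_rpow k hs)).hasSum

theorem hasDerivAt_div_rpow (c : ℝ) {b : ℝ} (hb : 0 < b) (x : ℝ) :
    HasDerivAt (fun x => c / b ^ x) (-(c * log b / b ^ x)) x := by
  have := ((hasDerivAt_neg x).const_rpow hb).const_mul c
  simp only [rpow_neg hb.le] at this
  exact this.congr_deriv (by field_simp)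

theorem hasDerivAt_etaLogSeries (k : ℕ) {s : ℝ} (hs : 1 < s) :
    HasDerivAt (etaLogSeries k) (-etaLogSeries (k + 1) s) s := by
  obtain ⟨a, ha, has⟩ := exists_between hs
  have := hasDerivAt_tsum_of_isPreconnected (summable_log_pow_div_rpow (k + 1) ha) isOpen_Ioi
    isPreconnected_Ioi (fun n x _ => hasDerivAt_div_rpow ((-1) ^ n * log ((n : ℝ) + 1) ^ k)
      (b := (n : ℝ) + 1) (by positivity) x) (fun n x hx => ?_) has
    (hasSum_etaLogSeries k hs).summable has
  · rwa [etaLogSeries, ← tsum_neg, tsum_congr fun n => by rw [pow_succ, ← mul_assoc]]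
  · rw [norm_neg, mul_assoc, ← pow_succ, norm_neg_one_pow_mul_log_pow_div_rpow]
    have hn : (1 : ℝ) ≤ n + 1 := by simp
    have := pow_nonneg (log_nonneg hn) (k + 1)
    gcongr
    exact le_of_lt hx

theorem etaLogSeries_zero : etaLogSeries 0 = dirichletEtaReal := by
  ext s
  simp [etaLogSeries, dirichletEtaReal]

theorem deriv_dirichletEtaReal {s : ℝ} (hs : 1 < s) :
    deriv dirichletEtaReal s = -etaLogSeries 1 s := by
  rw [← etaLogSeries_zero, (hasDerivAt_etaLogSeries 0 hs).deriv]

theorem deriv_deriv_dirichletEtaReal {s : ℝ} (hs : 1 < s) :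
    deriv (deriv dirichletEtaReal) s = etaLogSeries 2 s := by
  rw [((hasDerivAt_etaLogSeries 1 hs).neg.congr_of_eventuallyEq
    ((eventually_gt_nhds hs).mono fun x hx => deriv_dirichletEtaReal hx)).deriv, neg_neg]

theorem integral_Ioo_zero_one_eq_integral_Ioi_exp_neg (g : ℝ → ℝ) :
    ∫ x in Ioo 0 1, g x = ∫ t in Ioi 0, exp (-t) * g (exp (-t)) := by
  have himage : (fun t => exp (-t)) '' Ioi 0 = Ioo 0 1 := by
    rw [← image_image exp Neg.neg, image_neg_Ioi, neg_zero, image_exp_Iio, exp_zero]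
  rw [← himage, integral_image_eq_integral_abs_deriv_smul measurableSet_Ioi
    (fun t _ => (hasDerivAt_neg t).exp.hasDerivWithinAt)
    (fun x _ y _ h => neg_injective (exp_injective h))]
  simp

theorem hasSum_neg_one_pow_mul_exp_neg_mul {t : ℝ} (ht : 0 < t) :
    HasSum (fun n : ℕ => (-1) ^ n * exp (-(((n : ℝ) + 1) * t)))
      (exp (-t) / (1 + exp (-t))) := by
  have hr : |-exp (-t)| < 1 := by
    rw [abs_neg, abs_of_pos (exp_pos _), exp_lt_one_iff]; linarith
  have := (hasSum_geometric_of_abs_lt_one hr).mul_left (exp (-t))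
  rw [sub_neg_eq_add, ← div_eq_mul_inv] at this
  refine this.congr_fun fun n => ?_
  rw [neg_pow (exp (-t)), ← exp_nat_mul, mul_left_comm, ← exp_add]
  ring_nf

theorem integral_exp_neg_div_one_add_exp_neg_mul_rpow_mul_log_sq {s : ℝ} (hs : 1 < s) :
    ∫ t in Ioi 0, exp (-t) / (1 + exp (-t)) * t ^ (s - 1) * log t ^ 2 =
      gammaLogIntegral 2 s * etaLogSeries 0 s - 2 * gammaLogIntegral 1 s * etaLogSeries 1 s +
        gammaLogIntegral 0 s * etaLogSeries 2 s := by
  have hs0 : 0 < s := by linarith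
  set g : ℕ → ℝ → ℝ := fun n t => exp (-(((n : ℝ) + 1) * t)) * t ^ (s - 1) * log t ^ 2
  have hg_int (n : ℕ) : IntegrableOn (g n) (Ioi 0) :=
    integrableOn_exp_neg_mul_rpow_mul_log_pow (by positivity) hs0 2
  have hg_nonneg (n : ℕ) : ∀ t ∈ Ioi (0 : ℝ), 0 ≤ g n t := fun t ht => by
    have : 0 < t := ht
    positivity
  have hterm (n : ℕ) : ∫ t in Ioi 0, (-1) ^ n * g n t =
      gammaLogIntegral 2 s * ((-1) ^ n * log ((n : ℝ) + 1) ^ 0 / ((n : ℝ) + 1) ^ s) -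
        2 * gammaLogIntegral 1 s * ((-1) ^ n * log ((n : ℝ) + 1) ^ 1 / ((n : ℝ) + 1) ^ s) +
        gammaLogIntegral 0 s * ((-1) ^ n * log ((n : ℝ) + 1) ^ 2 / ((n : ℝ) + 1) ^ s) := by
    rw [integral_const_mul, integral_exp_neg_mul_rpow_mul_log_sq (by positivity) hs0,
      rpow_neg (by positivity)]
    ring
  have hsum := ((((hasSum_etaLogSeries 0 hs).mul_left (gammaLogIntegral 2 s)).sub
    ((hasSum_etaLogSeries 1 hs).mul_left (2 * gammaLogIntegral 1 s))).add
    ((hasSum_etaLogSeries 2 hs).mul_left (gammaLogIntegral 0 s))).congr_fun hterm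
  have hnorm (n : ℕ) :
      ∫ t in Ioi 0, ‖(-1) ^ n * g n t‖ = |∫ t in Ioi 0, (-1) ^ n * g n t| := by
    rw [integral_const_mul, abs_mul, abs_pow, abs_neg, abs_one, one_pow, one_mul,
      abs_of_nonneg (setIntegral_nonneg measurableSet_Ioi (hg_nonneg n))]
    refine setIntegral_congr_fun measurableSet_Ioi fun t ht => ?_
    rw [norm_mul, norm_pow, norm_neg, norm_one, one_pow, one_mul,
      Real.norm_of_nonneg (hg_nonneg n t ht)]
  have hswap := hasSum_integral_of_summable_integral_norm
    (fun n => (hg_int n).const_mul ((-1) ^ n)) (by simpa only [hnorm] using hsum.summable.abs)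
  rw [← hswap.unique hsum]
  refine setIntegral_congr_fun measurableSet_Ioi fun t ht => ?_
  rw [mul_assoc, ← ((hasSum_neg_one_pow_mul_exp_neg_mul ht).mul_right _).tsum_eq]
  simp only [g, mul_assoc]

/-- For every real `q > 1`,
`∫_0^1 (1/(1+x)) (log(1/x))^{q−1} (log(log(1/x)))² dx
  = Γ''(q) η(q) + 2 Γ'(q) η'(q) + Γ(q) η''(q)`. -/
theorem integral_loglog_sq_eq_gamma_eta (q : ℝ) (hq : 1 < q) :
    ∫ x in (0:ℝ)..1,
        (1 / (1 + x)) * Real.log (1 / x) ^ (q - 1) * (Real.log (Real.log (1 / x))) ^ 2 =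
      deriv (deriv Real.Gamma) q * dirichletEtaReal q +
        2 * deriv Real.Gamma q * deriv dirichletEtaReal q +
        Real.Gamma q * deriv (deriv dirichletEtaReal) q := by
  have hq0 : 0 < q := by linarith
  have hsubst : ∀ t ∈ Ioi (0 : ℝ),
      exp (-t) * (1 / (1 + exp (-t)) * log (1 / exp (-t)) ^ (q - 1) *
        log (log (1 / exp (-t))) ^ 2) = exp (-t) / (1 + exp (-t)) * t ^ (q - 1) * log t ^ 2 :=
    fun t _ => by rw [one_div (exp _), ← exp_neg, neg_neg, log_exp]; ring
  rw [intervalIntegral.integral_of_le zero_le_one, integral_Ioc_eq_integral_Ioo,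
    integral_Ioo_zero_one_eq_integral_Ioi_exp_neg, setIntegral_congr_fun measurableSet_Ioi hsubst,
    integral_exp_neg_div_one_add_exp_neg_mul_rpow_mul_log_sq hq,
    deriv_deriv_Gamma_eq_gammaLogIntegral_two hq0, deriv_Gamma_eq_gammaLogIntegral_one hq0,
    ← gammaLogIntegral_zero hq0, deriv_dirichletEtaReal hq, deriv_deriv_dirichletEtaReal hq,
    ← etaLogSeries_zero]
  ring
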